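/- Let S be a dense subsemigroup of ((0,∞),+) and let K = {A ⊆ S : S∖A is not piecewise syndetic near zero}. Then K is a filter on S and the set of ultrafilters containing K equals the closure of K(O⁺(S)) in βS; in particular this closure is a compact subsemigroup of βS. -/
import Mathlib


open Filter Topology Set

noncomputable section

/-- The extension of `+` on a discrete semigroup to its Stone–Čech compactification
(space of ultrafilters): `A ∈ p + q` iff `{x : -x + A ∈ q} ∈ p`. -/
def uadd {α : Type} [Add α] (p q : Ultrafilter α) : Ultrafilter α :=
  p.bind fun a => q.map (a + ·)

/-- `O⁺(S) = {p ∈ βS : for all ε > 0, S ∩ (0,ε) ∈ p}`. -/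
def Oplus (S : AddSubsemigroup ℝ) : Set (Ultrafilter S) :=
  {p | ∀ ε : ℝ, 0 < ε → {x : S | (x : ℝ) < ε} ∈ p}

def IsLeftIdealIn {α : Type} [Add α] (T L : Set (Ultrafilter α)) : Prop :=
  L.Nonempty ∧ L ⊆ T ∧ ∀ p ∈ T, ∀ q ∈ L, uadd p q ∈ L

def IsMinimalLeftIdealIn {α : Type} [Add α] (T L : Set (Ultrafilter α)) : Prop :=
  IsLeftIdealIn T L ∧ ∀ L', IsLeftIdealIn T L' → L' ⊆ L → L' = L

/-- The smallest ideal `K(O⁺(S))`, described as the union of all minimal left ideals. -/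
def KOplus (S : AddSubsemigroup ℝ) : Set (Ultrafilter S) :=
  {p | ∃ L, IsMinimalLeftIdealIn (Oplus S) L ∧ p ∈ L}

/-- A dynamical system over an additive semigroup. -/
structure DynSys (σ : Type) [Add σ] where
  X : Type
  [ts : TopologicalSpace X]
  [cs : CompactSpace X]
  [t2 : T2Space X]
  T : σ → X → X
  cont : ∀ s, Continuous (T s)
  comp : ∀ s t, T s ∘ T t = T (s + t)

attribute [instance] DynSys.ts DynSys.cs DynSys.t2

/-- `T_p(x) = p-lim_{s ∈ S} T_s(x)`. -/
def DynSys.Tp {σ : Type} [Add σ] (D : DynSys σ) (p : Ultrafilter σ) (x : D.X) : D.X :=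
  (p.map fun s => D.T s x).lim

/-- `B` is syndetic near zero. -/
def syndeticNearZero (S : AddSubsemigroup ℝ) (A : Set S) : Prop :=
  ∀ ε : ℝ, 0 < ε → ∃ F : Finset S, F.Nonempty ∧ (∀ t ∈ F, (t : ℝ) < ε) ∧
    ∃ δ : ℝ, 0 < δ ∧ ∀ s : S, (s : ℝ) < δ → ∃ t ∈ F, t + s ∈ A

def uniformlyRecurrentNearZero (S : AddSubsemigroup ℝ) (D : DynSys S) (x : D.X) : Prop :=
  ∀ W ∈ nhds x, syndeticNearZero S {s : S | D.T s x ∈ W}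

/-- `x` and `y` are proximal near zero. -/
def proximalNearZero (S : AddSubsemigroup ℝ) (D : DynSys S) (x y : D.X) : Prop :=
  ∀ U ∈ nhdsSet (Set.diagonal D.X), ∀ ε : ℝ, 0 < ε →
    ∃ s : S, (s : ℝ) < ε ∧ (D.T s x, D.T s y) ∈ U

/-- `A` is piecewise syndetic near zero. -/
def piecewiseSyndeticNearZero (S : AddSubsemigroup ℝ) (A : Set S) : Prop :=
  ∃ (F : ℕ → Finset S) (δ : ℕ → ℝ),
    (∀ n : ℕ, (F n).Nonempty ∧ (∀ t ∈ F n, (t : ℝ) < 1 / (n + 1)) ∧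
      0 < δ n ∧ δ n < 1 / (n + 1)) ∧
    ∀ G : Finset S, ∀ μ : ℝ, 0 < μ → ∃ x : S, (x : ℝ) < μ ∧
      ∀ n : ℕ, ∀ g ∈ G, (g : ℝ) < δ n → ∃ t ∈ F n, t + (g + x) ∈ A

/-- `A` is a J-set near zero. -/
def JSetNearZero (S : AddSubsemigroup ℝ) (A : Set S) : Prop :=
  ∀ F : Finset (ℕ → S), F.Nonempty →
    (∀ f ∈ F, Tendsto (fun n => ((f n : S) : ℝ)) atTop (nhds 0)) →
    ∀ δ : ℝ, 0 < δ → ∃ a : S, (a : ℝ) < δ ∧ ∃ H : Finset ℕ, H.Nonempty ∧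
      ∀ f ∈ F, ∃ b ∈ A, (b : ℝ) = (a : ℝ) + ∑ t ∈ H, ((f t : S) : ℝ)

def J0 (S : AddSubsemigroup ℝ) : Set (Ultrafilter S) :=
  {p | p ∈ Oplus S ∧ ∀ A ∈ p, JSetNearZero S A}

/-- jointly intermittently uniformly recurrent near zero. -/
def JIUR0 (S : AddSubsemigroup ℝ) (D : DynSys S) (x y : D.X) : Prop :=
  ∀ U ∈ nhds y, piecewiseSyndeticNearZero S {s : S | D.T s x ∈ U ∧ D.T s y ∈ U}

/-- jointly intermittently almost uniformly recurrent near zero. -/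
def JIAUR0 (S : AddSubsemigroup ℝ) (D : DynSys S) (x y : D.X) : Prop :=
  ∀ U ∈ nhds y, JSetNearZero S {s : S | D.T s x ∈ U ∧ D.T s y ∈ U}
/-- The filter of sets whose complement is not piecewise syndetic near zero. -/
def Kpws (S : AddSubsemigroup ℝ) : Set (Set S) :=
  {A | ¬ piecewiseSyndeticNearZero S Aᶜ}


section Stmt9Aux

theorem mem_uadd {α : Type} [Add α] {p q : Ultrafilter α} {A : Set α} :
    A ∈ uadd p q ↔ {a | {b | a + b ∈ A} ∈ q} ∈ p := Iff.rfl

theorem uadd_assoc {α : Type} [AddSemigroup α] (p q r : Ultrafilter α) :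
    uadd (uadd p q) r = uadd p (uadd q r) := by
  ext A
  simp only [mem_uadd, mem_setOf_eq, add_assoc]

theorem continuous_uadd_right {α : Type} [Add α] (q : Ultrafilter α) :
    Continuous fun p : Ultrafilter α => uadd p q := by
  apply continuous_generateFrom_iff.mpr
  rintro _ ⟨A, rfl⟩
  have h : (fun p : Ultrafilter α => uadd p q) ⁻¹' {u | A ∈ u}
      = {p : Ultrafilter α | {a | {b | a + b ∈ A} ∈ q} ∈ p} := rfl
  rw [h]
  exact ultrafilter_isOpen_basic _

theorem mem_closure_iff_ultra {α : Type} {T : Set (Ultrafilter α)} {p : Ultrafilter α} :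
    p ∈ closure T ↔ ∀ A ∈ p, ∃ q ∈ T, A ∈ q := by
  rw [ultrafilterBasis_is_basis.mem_closure_iff]
  constructor
  · intro h A hA
    obtain ⟨q, hq1, hq2⟩ := h {u | A ∈ u} ⟨A, rfl⟩ hA
    exact ⟨q, hq2, hq1⟩
  · rintro h _ ⟨A, rfl⟩ hA
    obtain ⟨q, hq, hAq⟩ := h A hA
    exact ⟨q, hAq, hq⟩

theorem exists_ultra_of_directed {α : Type} {ι : Type} [Nonempty ι] (C : ι → Set α)
    (hne : ∀ i, (C i).Nonempty) (hdir : ∀ i j, ∃ k, C k ⊆ C i ∧ C k ⊆ C j) :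
    ∃ u : Ultrafilter α, ∀ i, C i ∈ u := by
  have hd : Directed (· ≥ ·) fun i => (𝓟 (C i) : Filter α) := by
    intro i j
    obtain ⟨k, h1, h2⟩ := hdir i j
    exact ⟨k, by simpa using h1, by simpa using h2⟩
  haveI : (⨅ i, 𝓟 (C i) : Filter α).NeBot :=
    iInf_neBot_of_directed' hd fun i => principal_neBot_iff.mpr (hne i)
  exact ⟨Ultrafilter.of _, fun i =>
    Ultrafilter.of_le _ (mem_iInf_of_mem i (mem_principal_self _))⟩

variable (S : AddSubsemigroup ℝ)

theorem exists_small (hdense : Set.Ioi (0 : ℝ) ⊆ closure (S : Set ℝ)) {ε : ℝ} (hε : 0 < ε) :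
    ∃ s : S, (s : ℝ) < ε := by
  have h : (ε/2) ∈ closure (S : Set ℝ) := hdense (mem_Ioi.mpr (by positivity))
  obtain ⟨x, hx1, hx2⟩ := mem_closure_iff.mp h (Ioo 0 ε) isOpen_Ioo ⟨by linarith, by linarith⟩
  exact ⟨⟨x, hx2⟩, hx1.2⟩

theorem Oplus_closed : IsClosed (Oplus S) := by
  have h : Oplus S = ⋂ ε ∈ Ioi (0:ℝ), {p : Ultrafilter S | {x : S | (x:ℝ) < ε} ∈ p} := by
    ext p; simp [Oplus, Set.mem_iInter]
  rw [h]
  exact isClosed_biInter fun ε _ => ultrafilter_isClosed_basic _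

theorem Oplus_compact : IsCompact (Oplus S) := (Oplus_closed S).isCompact

theorem Oplus_nonempty (hdense : Set.Ioi (0 : ℝ) ⊆ closure (S : Set ℝ)) :
    (Oplus S).Nonempty := by
  haveI : Nonempty {ε : ℝ // 0 < ε} := ⟨⟨1, one_pos⟩⟩
  obtain ⟨u, hu⟩ := exists_ultra_of_directed (fun ε : {ε : ℝ // 0 < ε} => {x : S | (x:ℝ) < ε.1})
    (fun ε => by obtain ⟨s, hs⟩ := exists_small S hdense ε.2; exact ⟨s, hs⟩)
    (fun i j => ⟨⟨min i.1 j.1, lt_min i.2 j.2⟩,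
      fun x (hx : (x:ℝ) < min i.1 j.1) => lt_of_lt_of_le hx (min_le_left _ _),
      fun x (hx : (x:ℝ) < min i.1 j.1) => lt_of_lt_of_le hx (min_le_right _ _)⟩)
  exact ⟨u, fun ε hε => hu ⟨ε, hε⟩⟩

theorem Oplus_add {p q : Ultrafilter S} (hp : p ∈ Oplus S) (hq : q ∈ Oplus S) :
    uadd p q ∈ Oplus S := by
  intro ε hε
  rw [mem_uadd]
  refine mem_of_superset (hp (ε/2) (by linarith)) fun a ha => ?_
  refine mem_of_superset (hq (ε/2) (by linarith)) fun b hb => ?_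
  simp only [mem_setOf_eq] at *
  push_cast
  linarith

/-- The image `T + q` for `q ∈ Oplus` is a left ideal. -/
theorem image_leftIdeal {q : Ultrafilter S} (hq : q ∈ Oplus S)
    (hdense : Set.Ioi (0 : ℝ) ⊆ closure (S : Set ℝ)) :
    IsLeftIdealIn (Oplus S) ((fun p => uadd p q) '' Oplus S) := by
  refine ⟨?_, ?_, ?_⟩
  · obtain ⟨r, hr⟩ := Oplus_nonempty S hdense
    exact ⟨uadd r q, r, hr, rfl⟩
  · rintro _ ⟨r, hr, rfl⟩
    exact Oplus_add S hr hq
  · rintro p hp _ ⟨r, hr, rfl⟩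
    exact ⟨uadd p r, Oplus_add S hp hr, (uadd_assoc p r q)⟩

theorem image_subset_ideal {I : Set (Ultrafilter S)} (hI : IsLeftIdealIn (Oplus S) I)
    {q : Ultrafilter S} (hq : q ∈ I) :
    (fun p => uadd p q) '' Oplus S ⊆ I := by
  rintro _ ⟨r, hr, rfl⟩
  exact hI.2.2 r hr q hq

theorem exists_minimal_leftIdeal (hdense : Set.Ioi (0 : ℝ) ⊆ closure (S : Set ℝ))
    {I : Set (Ultrafilter S)} (hI : IsLeftIdealIn (Oplus S) I) :
    ∃ L, IsMinimalLeftIdealIn (Oplus S) L ∧ L ⊆ I := by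
  obtain ⟨q, hqI⟩ := hI.1
  have hqO : q ∈ Oplus S := hI.2.1 hqI
  set Tq := (fun p => uadd p q) '' Oplus S with hTq
  have hTqIdeal : IsLeftIdealIn (Oplus S) Tq := image_leftIdeal S hqO hdense
  have hTqI : Tq ⊆ I := image_subset_ideal S hI hqI
  have hTqClosed : IsClosed Tq :=
    ((Oplus_compact S).image (continuous_uadd_right q)).isClosed
  -- Zorn on closed left ideals contained in Tq
  set 𝒞 : Set (Set (Ultrafilter S)) :=
    {L | IsLeftIdealIn (Oplus S) L ∧ IsClosed L ∧ L ⊆ Tq} with h𝒞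
  have hzorn := zorn_superset_nonempty 𝒞 ?_ Tq ⟨hTqIdeal, hTqClosed, Set.Subset.rfl⟩
  · obtain ⟨m, hmTq, hmin⟩ := hzorn
    have hm𝒞 : m ∈ 𝒞 := hmin.1
    refine ⟨m, ⟨hm𝒞.1, ?_⟩, fun x hx => hTqI (hmTq hx)⟩
    intro L' hL' hL'm
    obtain ⟨q', hq'L'⟩ := hL'.1
    have hq'O : q' ∈ Oplus S := hL'.2.1 hq'L'
    set Tq' := (fun p => uadd p q') '' Oplus S with hTq'
    have hTq'L' : Tq' ⊆ L' := image_subset_ideal S hL' hq'L'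
    have hTq'𝒞 : Tq' ∈ 𝒞 := ⟨image_leftIdeal S hq'O hdense,
      ((Oplus_compact S).image (continuous_uadd_right q')).isClosed,
      (hTq'L'.trans hL'm).trans hmTq⟩
    have : m ⊆ Tq' := hmin.2 hTq'𝒞 (hTq'L'.trans hL'm)
    exact Set.Subset.antisymm hL'm (this.trans hTq'L')
  · -- chains
    intro c hc𝒞 hchain hcne
    refine ⟨⋂₀ c, ⟨⟨?_, ?_, ?_⟩, ?_, ?_⟩, fun s hs => sInter_subset_of_mem hs⟩
    · haveI : Nonempty c := hcne.to_subtype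
      apply IsCompact.nonempty_sInter_of_directed_nonempty_isCompact_isClosed
      · intro x hx y hy
        rcases hchain.total hx hy with h | h
        · exact ⟨x, hx, Set.Subset.rfl, h⟩
        · exact ⟨y, hy, h, Set.Subset.rfl⟩
      · exact fun U hU => (hc𝒞 hU).1.1
      · exact fun U hU => (hc𝒞 hU).2.1.isCompact
      · exact fun U hU => (hc𝒞 hU).2.1
    · obtain ⟨L, hL⟩ := hcne
      exact (sInter_subset_of_mem hL).trans ((hc𝒞 hL).1.2.1)
    · intro p hp x hx
      intro L hL
      exact (hc𝒞 hL).1.2.2 p hp x (hx L hL)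
    · exact isClosed_sInter fun L hL => (hc𝒞 hL).2.1
    · obtain ⟨L, hL⟩ := hcne
      exact (sInter_subset_of_mem hL).trans ((hc𝒞 hL).2.2)

theorem uadd_mem_KOplus {r q : Ultrafilter S} (hr : r ∈ KOplus S) (hq : q ∈ Oplus S) :
    uadd r q ∈ KOplus S := by
  obtain ⟨L, ⟨hLid, hLmin⟩, hrL⟩ := hr
  set Lq := (fun p => uadd p q) '' L with hLq
  have hLqid : IsLeftIdealIn (Oplus S) Lq := by
    refine ⟨⟨uadd r q, r, hrL, rfl⟩, ?_, ?_⟩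
    · rintro _ ⟨s, hs, rfl⟩
      exact Oplus_add S (hLid.2.1 hs) hq
    · rintro p hp _ ⟨s, hs, rfl⟩
      exact ⟨uadd p s, hLid.2.2 p hp s hs, uadd_assoc p s q⟩
  refine ⟨Lq, ⟨hLqid, ?_⟩, ⟨r, hrL, rfl⟩⟩
  intro L' hL' hL'Lq
  set Aset := {s | s ∈ L ∧ uadd s q ∈ L'} with hAset
  have hAne : Aset.Nonempty := by
    obtain ⟨x, hx⟩ := hL'.1
    obtain ⟨s, hs, rfl⟩ := hL'Lq hx
    exact ⟨s, hs, hx⟩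
  have hAid : IsLeftIdealIn (Oplus S) Aset := by
    refine ⟨hAne, fun s hs => hLid.2.1 hs.1, ?_⟩
    intro p hp s hs
    refine ⟨hLid.2.2 p hp s hs.1, ?_⟩
    rw [uadd_assoc]
    exact hL'.2.2 p hp _ hs.2
  have hAL : Aset = L := hLmin Aset hAid fun s hs => hs.1
  apply Set.Subset.antisymm hL'Lq
  rintro _ ⟨s, hs, rfl⟩
  rw [← hAL] at hs
  exact hs.2

theorem KOplus_subset : KOplus S ⊆ Oplus S := by
  rintro p ⟨L, hL, hpL⟩
  exact hL.1.2.1 hpL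

theorem KOplus_nonempty (hdense : Set.Ioi (0 : ℝ) ⊆ closure (S : Set ℝ)) :
    (KOplus S).Nonempty := by
  have hT : IsLeftIdealIn (Oplus S) (Oplus S) :=
    ⟨Oplus_nonempty S hdense, Set.Subset.rfl, fun p hp q hq => Oplus_add S hp hq⟩
  obtain ⟨L, hL, _⟩ := exists_minimal_leftIdeal S hdense hT
  obtain ⟨p, hp⟩ := hL.1.1
  exact ⟨p, L, hL, hp⟩

theorem pws_of_mem_KOplus (hpos : ∀ x : ℝ, x ∈ S → 0 < x)
    (hdense : Set.Ioi (0 : ℝ) ⊆ closure (S : Set ℝ))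
    {p : Ultrafilter S} (hp : p ∈ KOplus S) {A : Set S} (hA : A ∈ p) :
    piecewiseSyndeticNearZero S A := by
  obtain ⟨L, ⟨⟨hLne, hLsub, hLstab⟩, hLmin⟩, hpL⟩ := hp
  have hpO : p ∈ Oplus S := hLsub hpL
  have hLeq : ∀ v ∈ L, (fun r => uadd r v) '' Oplus S = L := by
    intro v hv
    apply hLmin
    · exact image_leftIdeal S (hLsub hv) hdense
    · exact image_subset_ideal S ⟨hLne, hLsub, hLstab⟩ hv
  have hLcpt : IsCompact L := by
    rw [← hLeq p hpL]
    exact (Oplus_compact S).image (continuous_uadd_right p)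
  have cover : ∀ ε : ℝ, 0 < ε → ∀ v ∈ L, ∃ t : S, (t:ℝ) < ε ∧ {b | t + b ∈ A} ∈ v := by
    intro ε hε v hv
    have hpmem : p ∈ (fun r => uadd r v) '' Oplus S := by rw [hLeq v hv]; exact hpL
    obtain ⟨r, hrO, hrv⟩ := hpmem
    have h1 : {t : S | {b | t + b ∈ A} ∈ v} ∈ r := by
      rw [← hrv] at hA; exact mem_uadd.mp hA
    obtain ⟨t, ht1, ht2⟩ := Filter.nonempty_of_mem (inter_mem (hrO ε hε) h1)
    exact ⟨t, ht1, ht2⟩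
  have Fex : ∀ n : ℕ, ∃ Fn : Finset S, Fn.Nonempty ∧ (∀ t ∈ Fn, (t:ℝ) < 1/(n+1)) ∧
      ∀ v ∈ L, ∃ t ∈ Fn, {b | t + b ∈ A} ∈ v := by
    intro n
    have hε : (0:ℝ) < 1/(n+1) := by positivity
    have hcov : L ⊆ ⋃ t ∈ {t : S | (t:ℝ) < 1/(n+1)},
        {v : Ultrafilter S | {b | t + b ∈ A} ∈ v} := by
      intro v hv
      obtain ⟨t, ht1, ht2⟩ := cover _ hε v hv
      exact Set.mem_biUnion ht1 ht2
    obtain ⟨b', hb'sub, hb'fin, hb'cov⟩ := hLcpt.elim_finite_subcover_image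
      (fun t _ => ultrafilter_isOpen_basic _) hcov
    refine ⟨hb'fin.toFinset, ?_, ?_, ?_⟩
    · obtain ⟨v, hv⟩ := hLne
      obtain ⟨t, htb', _⟩ := Set.mem_iUnion₂.mp (hb'cov hv)
      exact ⟨t, hb'fin.mem_toFinset.mpr htb'⟩
    · intro t ht
      exact hb'sub (hb'fin.mem_toFinset.mp ht)
    · intro v hv
      obtain ⟨t, htb', hmem⟩ := Set.mem_iUnion₂.mp (hb'cov hv)
      exact ⟨t, hb'fin.mem_toFinset.mpr htb', hmem⟩
  choose F hFne hFlt hFcov using Fex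
  set B : ℕ → Set S := fun n => {s | ∃ t ∈ F n, t + s ∈ A} with hB
  have hBmem : ∀ n, ∀ v ∈ L, B n ∈ v := by
    intro n v hv
    obtain ⟨t, htF, htv⟩ := hFcov n v hv
    exact mem_of_superset htv fun s hs => ⟨t, htF, hs⟩
  have δex : ∀ n : ℕ, ∃ d : ℝ, 0 < d ∧ ∀ y : S, (y:ℝ) < d → {s | y + s ∈ B n} ∈ p := by
    intro n
    by_contra hcon
    push_neg at hcon
    haveI : Nonempty {ε : ℝ // 0 < ε} := ⟨⟨1, one_pos⟩⟩
    obtain ⟨r, hr⟩ := exists_ultra_of_directed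
      (fun ε : {ε : ℝ // 0 < ε} => {y : S | (y:ℝ) < ε.1 ∧ {s | y + s ∈ B n} ∉ p})
      (fun ε => by
        obtain ⟨y, hy1, hy2⟩ := hcon ε.1 ε.2
        exact ⟨y, hy1, hy2⟩)
      (fun i j => ⟨⟨min i.1 j.1, lt_min i.2 j.2⟩,
        fun y hy => ⟨lt_of_lt_of_le hy.1 (min_le_left _ _), hy.2⟩,
        fun y hy => ⟨lt_of_lt_of_le hy.1 (min_le_right _ _), hy.2⟩⟩)
    have hrO : r ∈ Oplus S := fun ε hε => mem_of_superset (hr ⟨ε, hε⟩) fun y hy => hy.1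
    have h1 : B n ∈ uadd r p := hBmem n _ (hLstab r hrO p hpL)
    have h2 : {y : S | {s | y + s ∈ B n} ∈ p} ∈ r := mem_uadd.mp h1
    have h3 : {y : S | {s | y + s ∈ B n} ∈ p}ᶜ ∈ r :=
      mem_of_superset (hr ⟨1, one_pos⟩) fun y hy => hy.2
    exact absurd h2 (Ultrafilter.compl_mem_iff_notMem.mp h3)
  choose d hdpos hd using δex
  refine ⟨F, fun n => min (d n) (1/(n+2)), ?_, ?_⟩
  · intro n
    refine ⟨hFne n, hFlt n, lt_min (hdpos n) (by positivity), ?_⟩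
    calc min (d n) (1/((n:ℝ)+2)) ≤ 1/((n:ℝ)+2) := min_le_right _ _
      _ < 1/((n:ℝ)+1) := by
        apply one_div_lt_one_div_of_lt (by positivity) (by linarith)
  · intro G μ hμ
    set N := (G.sup fun g => ⌈1/(g:ℝ)⌉₊) + 1 with hNdef
    have key : ∀ g ∈ G, ∀ n : ℕ, (g:ℝ) < min (d n) (1/(n+2)) → n < N := by
      intro g hg n hlt
      have hgpos : (0:ℝ) < g := hpos g g.2
      have h1 : (g:ℝ) < 1/((n:ℝ)+2) := lt_of_lt_of_le hlt (min_le_right _ _)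
      rw [lt_div_iff₀ (show (0:ℝ) < (n:ℝ)+2 by positivity)] at h1
      have h2 : (n:ℝ) + 2 < 1/(g:ℝ) := by
        rw [lt_div_iff₀ hgpos]
        nlinarith
      have h3 : (n:ℝ) ≤ (⌈1/(g:ℝ)⌉₊ : ℝ) := le_trans (by linarith) (Nat.le_ceil _)
      have h4 : n ≤ ⌈1/(g:ℝ)⌉₊ := by exact_mod_cast h3
      have h5 : n ≤ G.sup fun g => ⌈1/(g:ℝ)⌉₊ := le_trans h4 (Finset.le_sup (f := fun g : S => ⌈1/(g:ℝ)⌉₊) hg)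
      omega
    have hX : ({x : S | (x:ℝ) < μ} ∩ ⋂ n ∈ Finset.range N, ⋂ g ∈ G,
        {x : S | (g:ℝ) < min (d n) (1/(n+2)) → g + x ∈ B n}) ∈ p := by
      apply inter_mem (hpO μ hμ)
      rw [Filter.biInter_finset_mem]
      intro n _
      rw [Filter.biInter_finset_mem]
      intro g hg
      by_cases hc : (g:ℝ) < min (d n) (1/(n+2))
      · exact mem_of_superset (hd n g (lt_of_lt_of_le hc (min_le_left _ _)))
          fun x hx _ => hx
      · exact mem_of_superset univ_mem fun x _ h => absurd h hc
    obtain ⟨x, hx1, hx2⟩ := Filter.nonempty_of_mem hX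
    refine ⟨x, hx1, ?_⟩
    intro n g hg hlt
    have hnN : n < N := key g hg n hlt
    have hx3 := Set.mem_iInter₂.mp hx2 n (Finset.mem_range.mpr hnN)
    exact Set.mem_iInter₂.mp hx3 g hg hlt

theorem exists_KOplus_of_pws (hdense : Set.Ioi (0 : ℝ) ⊆ closure (S : Set ℝ))
    {A : Set S} (hA : piecewiseSyndeticNearZero S A) :
    ∃ p ∈ KOplus S, A ∈ p := by
  obtain ⟨F, δ, hFδ, hthick⟩ := hA
  haveI : Nonempty (Finset S × {μ : ℝ // 0 < μ}) := ⟨⟨∅, ⟨1, one_pos⟩⟩⟩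
  obtain ⟨q, hq⟩ := exists_ultra_of_directed (fun Gμ : Finset S × {μ : ℝ // 0 < μ} =>
      {x : S | (x:ℝ) < Gμ.2.1 ∧ ∀ n : ℕ, ∀ g ∈ Gμ.1, (g:ℝ) < δ n →
        ∃ t ∈ F n, t + (g + x) ∈ A})
    (fun Gμ => by
      obtain ⟨x, hx1, hx2⟩ := hthick Gμ.1 Gμ.2.1 Gμ.2.2
      exact ⟨x, hx1, hx2⟩)
    (fun i j => by
      refine ⟨⟨i.1 ∪ j.1, ⟨min i.2.1 j.2.1, lt_min i.2.2 j.2.2⟩⟩, ?_, ?_⟩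
      · rintro x ⟨hx1, hx2⟩
        exact ⟨lt_of_lt_of_le hx1 (min_le_left _ _),
          fun n g hg hlt => hx2 n g (Finset.mem_union_left _ hg) hlt⟩
      · rintro x ⟨hx1, hx2⟩
        exact ⟨lt_of_lt_of_le hx1 (min_le_right _ _),
          fun n g hg hlt => hx2 n g (Finset.mem_union_right _ hg) hlt⟩)
  have hqO : q ∈ Oplus S := fun ε hε =>
    mem_of_superset (hq ⟨∅, ⟨ε, hε⟩⟩) fun x hx => hx.1
  set B : ℕ → Set S := fun n => {s | ∃ t ∈ F n, t + s ∈ A} with hB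
  have hBq : ∀ n : ℕ, ∀ g : S, (g:ℝ) < δ n → {x | g + x ∈ B n} ∈ q := by
    intro n g hlt
    refine mem_of_superset (hq ⟨{g}, ⟨1, one_pos⟩⟩) fun x hx => ?_
    exact hx.2 n g (Finset.mem_singleton_self g) hlt
  have hIid : IsLeftIdealIn (Oplus S) ((fun r => uadd r q) '' Oplus S) :=
    image_leftIdeal S hqO hdense
  have hBI : ∀ u ∈ (fun r => uadd r q) '' Oplus S, ∀ n, B n ∈ u := by
    rintro _ ⟨r, hrO, rfl⟩ n
    rw [mem_uadd]
    exact mem_of_superset (hrO (δ n) (hFδ n).2.2.1) fun a ha => hBq n a ha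
  obtain ⟨L, hLmin, hLI⟩ := exists_minimal_leftIdeal S hdense hIid
  obtain ⟨u, hu⟩ := hLmin.1.1
  have hBu : ∀ n, B n ∈ u := fun n => hBI u (hLI hu) n
  have hsplit : ∀ n : ℕ, ∃ t ∈ F n, {s : S | t + s ∈ A} ∈ u := by
    intro n
    have hcup : (⋃ t ∈ (F n : Set S), {s : S | t + s ∈ A}) ∈ u := by
      refine mem_of_superset (hBu n) ?_
      rintro s ⟨t, htF, hts⟩
      exact Set.mem_biUnion htF hts
    obtain ⟨t, ht, hmem⟩ := (Ultrafilter.finite_biUnion_mem_iff (F n).finite_toSet).mp hcup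
    exact ⟨t, ht, hmem⟩
  choose t htF htA using hsplit
  obtain ⟨v, hv⟩ := exists_ultra_of_directed (fun N : ℕ => {a : S | ∃ m, N ≤ m ∧ a = t m})
    (fun N => ⟨t N, N, le_rfl, rfl⟩)
    (fun i j => ⟨max i j,
      by rintro a ⟨m, hm, rfl⟩; exact ⟨m, le_trans (le_max_left _ _) hm, rfl⟩,
      by rintro a ⟨m, hm, rfl⟩; exact ⟨m, le_trans (le_max_right _ _) hm, rfl⟩⟩)
  have hvO : v ∈ Oplus S := by
    intro ε hε
    obtain ⟨N, hN⟩ := exists_nat_one_div_lt hε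
    refine mem_of_superset (hv N) ?_
    rintro a ⟨m, hm, rfl⟩
    have h1 : ((t m : S) : ℝ) < 1/(m+1) := (hFδ m).2.1 _ (htF m)
    have h2 : (1:ℝ)/(m+1) ≤ 1/(N+1) := by
      apply one_div_le_one_div_of_le (by positivity)
      have : (N:ℝ) ≤ m := by exact_mod_cast hm
      linarith
    exact lt_of_lt_of_le h1 (le_of_lt (lt_of_le_of_lt h2 hN))
  refine ⟨uadd v u, ⟨L, hLmin, hLmin.1.2.2 v hvO u hu⟩, ?_⟩
  rw [mem_uadd]
  refine mem_of_superset (hv 0) ?_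
  rintro a ⟨m, _, rfl⟩
  exact htA m


theorem pws_mono {A B : Set S} (hAB : A ⊆ B) (h : piecewiseSyndeticNearZero S A) :
    piecewiseSyndeticNearZero S B := by
  obtain ⟨F, δ, h1, h2⟩ := h
  refine ⟨F, δ, h1, fun G μ hμ => ?_⟩
  obtain ⟨x, hx1, hx2⟩ := h2 G μ hμ
  exact ⟨x, hx1, fun n g hg hlt => by
    obtain ⟨t, ht, hta⟩ := hx2 n g hg hlt
    exact ⟨t, ht, hAB hta⟩⟩

end Stmt9Aux

theorem stmt9 (S : AddSubsemigroup ℝ)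
    (hpos : ∀ x : ℝ, x ∈ S → 0 < x)
    (hdense : Set.Ioi (0 : ℝ) ⊆ closure (S : Set ℝ)) :
    Set.univ ∈ Kpws S ∧ ∅ ∉ Kpws S ∧
    (∀ A B : Set S, A ∈ Kpws S → A ⊆ B → B ∈ Kpws S) ∧
    (∀ A B : Set S, A ∈ Kpws S → B ∈ Kpws S → A ∩ B ∈ Kpws S) ∧
    {p : Ultrafilter S | ∀ A ∈ Kpws S, A ∈ p} = closure (KOplus S) ∧
    IsCompact (closure (KOplus S)) ∧
    ∀ p ∈ closure (KOplus S), ∀ q ∈ closure (KOplus S),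
      uadd p q ∈ closure (KOplus S)  := by
  have hKiff : ∀ A : Set S, piecewiseSyndeticNearZero S A ↔ ∃ p ∈ KOplus S, A ∈ p :=
    fun A => ⟨fun h => exists_KOplus_of_pws S hdense h,
      fun ⟨p, hp, hA⟩ => pws_of_mem_KOplus S hpos hdense hp hA⟩
  have hchar : ∀ p : Ultrafilter S,
      p ∈ closure (KOplus S) ↔ ∀ A ∈ p, piecewiseSyndeticNearZero S A := by
    intro p
    rw [mem_closure_iff_ultra]
    constructor
    · intro h A hA
      exact (hKiff A).mpr (h A hA)
    · intro h A hA
      exact (hKiff A).mp (h A hA)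
  refine ⟨?_, ?_, ?_, ?_, ?_, ?_, ?_⟩
  · intro hcon
    obtain ⟨p, _, hp⟩ := (hKiff _).mp hcon
    rw [Set.compl_univ] at hp
    exact absurd hp (by simp)
  · intro hcon
    apply hcon
    rw [Set.compl_empty]
    obtain ⟨p, hpK⟩ := KOplus_nonempty S hdense
    exact (hKiff _).mpr ⟨p, hpK, univ_mem⟩
  · intro A B hA hAB hcon
    exact hA (pws_mono S (Set.compl_subset_compl.mpr hAB) hcon)
  · intro A B hA hB hcon
    rw [Set.compl_inter] at hcon
    obtain ⟨p, hpK, hp⟩ := (hKiff _).mp hcon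
    rcases Ultrafilter.union_mem_iff.mp hp with h | h
    · exact hA ((hKiff _).mpr ⟨p, hpK, h⟩)
    · exact hB ((hKiff _).mpr ⟨p, hpK, h⟩)
  · ext p
    simp only [mem_setOf_eq]
    rw [hchar p]
    constructor
    · intro h A hAp
      by_contra hn
      have h2 : Aᶜ ∈ Kpws S := by
        simp only [Kpws, mem_setOf_eq, compl_compl]
        exact hn
      exact absurd hAp (Ultrafilter.compl_mem_iff_notMem.mp (h _ h2))
    · intro h A hAK
      by_contra hn
      exact hAK (h _ (Ultrafilter.compl_mem_iff_notMem.mpr hn))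
  · exact isClosed_closure.isCompact
  · intro p hp q hq
    have hqO : q ∈ Oplus S := closure_minimal (KOplus_subset S) (Oplus_closed S) hq
    rw [mem_closure_iff_ultra] at hp ⊢
    intro A hApq
    obtain ⟨r, hrK, hBr⟩ := hp _ (mem_uadd.mp hApq)
    exact ⟨uadd r q, uadd_mem_KOplus S hrK hqO, mem_uadd.mpr hBr⟩
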